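/- arXiv:1304.1773 — 3 statements merged into one kernel-verified Lean document; each statement's English description precedes it below -/
import Mathlib

section
/- Let λ be a real number, let I ⊆ ℝ be an interval, and let α : ℝ → ℝ be twice continuously differentiable on I and satisfy the barrier ODE α''(v)·(1 + λ²·α(v)²) + α(v)·(1 + λ²·α'(v)²) = 0 for all v ∈ I. Then the quantity Q(v) = (1 + λ²·α'(v)²)·(1 + λ²·α(v)²) is constant on I, and its constant value is ≥ 1. -/
/-! The derivative of `Q` along a solution is `2λ²α'` times the left-hand side of the ODE, so `Q`
is constant on the interval; each factor of `Q` is at least `1`. -/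

theorem Convex.eq_of_hasDerivWithinAt_eq_zero {E : Type*} [NormedAddCommGroup E] [NormedSpace ℝ E]
    {s : Set ℝ} (hs : Convex ℝ s) {f : ℝ → E} (hf : ∀ x ∈ s, HasDerivWithinAt f 0 s x)
    {x y : ℝ} (hx : x ∈ s) (hy : y ∈ s) : f y = f x := by
  have h := hs.norm_image_sub_le_of_norm_hasDerivWithin_le hf (C := 0) (fun _ _ => by simp) hx hy
  simpa [sub_eq_zero] using h

def barrierFirstIntegral (lam a a' : ℝ) : ℝ :=
  (1 + lam ^ 2 * a' ^ 2) * (1 + lam ^ 2 * a ^ 2)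

theorem one_le_barrierFirstIntegral (lam a a' : ℝ) : 1 ≤ barrierFirstIntegral lam a a' := by
  have h1 : 1 ≤ 1 + lam ^ 2 * a' ^ 2 := le_add_of_nonneg_right (by positivity)
  have h2 : 1 ≤ 1 + lam ^ 2 * a ^ 2 := le_add_of_nonneg_right (by positivity)
  simpa [barrierFirstIntegral] using mul_le_mul h1 h2 zero_le_one (by positivity)

theorem hasDerivWithinAt_barrierFirstIntegral {lam : ℝ} {s : Set ℝ} {α α' : ℝ → ℝ}
    {a'' v : ℝ} (hα : HasDerivWithinAt α (α' v) s v) (hα' : HasDerivWithinAt α' a'' s v) :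
    HasDerivWithinAt (fun w => barrierFirstIntegral lam (α w) (α' w))
      (2 * lam ^ 2 * α' v * (a'' * (1 + lam ^ 2 * α v ^ 2) + α v * (1 + lam ^ 2 * α' v ^ 2)))
      s v := by
  have h : HasDerivWithinAt (fun w => barrierFirstIntegral lam (α w) (α' w))
      (lam ^ 2 * (2 * α' v ^ 1 * a'') * (1 + lam ^ 2 * α v ^ 2)
        + (1 + lam ^ 2 * α' v ^ 2) * (lam ^ 2 * (2 * α v ^ 1 * α' v))) s v :=
    (((hα'.pow 2).const_mul (lam ^ 2)).const_add 1).mul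
      (((hα.pow 2).const_mul (lam ^ 2)).const_add 1)
  exact h.congr_deriv (by ring)

theorem barrier_ode_first_integral_general (lam : ℝ) (I : Set ℝ) (hI : I.OrdConnected)
    (α α' α'' : ℝ → ℝ)
    (hd1 : ∀ v ∈ I, HasDerivWithinAt α (α' v) I v)
    (hd2 : ∀ v ∈ I, HasDerivWithinAt α' (α'' v) I v)
    (hode : ∀ v ∈ I,
      α'' v * (1 + lam ^ 2 * (α v) ^ 2) + α v * (1 + lam ^ 2 * (α' v) ^ 2) = 0) :
    ∃ T : ℝ, 1 ≤ T ∧ ∀ v ∈ I,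
      (1 + lam ^ 2 * (α' v) ^ 2) * (1 + lam ^ 2 * (α v) ^ 2) = T := by
  rcases I.eq_empty_or_nonempty with rfl | ⟨v₀, hv₀⟩
  · exact ⟨1, le_rfl, by simp⟩
  have hQ' : ∀ v ∈ I, HasDerivWithinAt (fun w => barrierFirstIntegral lam (α w) (α' w)) 0 I v := by
    intro v hv
    simpa [hode v hv] using hasDerivWithinAt_barrierFirstIntegral (lam := lam) (hd1 v hv) (hd2 v hv)
  exact ⟨barrierFirstIntegral lam (α v₀) (α' v₀), one_le_barrierFirstIntegral _ _ _,
    fun v hv => hI.convex.eq_of_hasDerivWithinAt_eq_zero hQ' hv₀ hv⟩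

/-- For a `C²` solution `α` of the barrier ODE
`α''·(1 + λ²α²) + α·(1 + λ²(α')²) = 0` on an interval `I`, the quantity
`Q(v) = (1 + λ²·α'(v)²)·(1 + λ²·α(v)²)` is constant on `I`, with constant value `≥ 1`. -/
theorem barrier_ode_first_integral (lam : ℝ) (I : Set ℝ) (hI : I.OrdConnected)
    (α α' α'' : ℝ → ℝ)
    (hd1 : ∀ v ∈ I, HasDerivWithinAt α (α' v) I v)
    (hd2 : ∀ v ∈ I, HasDerivWithinAt α' (α'' v) I v)
    (hcont : ContinuousOn α'' I)
    (hode : ∀ v ∈ I,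
      α'' v * (1 + lam ^ 2 * (α v) ^ 2) + α v * (1 + lam ^ 2 * (α' v) ^ 2) = 0) :
    ∃ T : ℝ, 1 ≤ T ∧ ∀ v ∈ I,
      (1 + lam ^ 2 * (α' v) ^ 2) * (1 + lam ^ 2 * (α v) ^ 2) = T :=
  barrier_ode_first_integral_general lam I hI α α' α'' hd1 hd2 hode
end

section
/- Let λ > 0, M > 0 and T > 1 + λ²M² be real numbers, let v₁ > 0, and let α be a twice continuously differentiable function on [0, v₁] satisfying the barrier ODE α''·(1 + λ²α²) + α·(1 + λ²(α')²) = 0, with first integral (1 + λ²·α'(v)²)·(1 + λ²·α(v)²) = T constant on [0, v₁]. Suppose α(0) = 0, α'(v) ≥ 0 on [0, v₁], and 0 ≤ α(v) ≤ M on [0, v₁]. Then v₁ ≤ M·λ/√(T/(1 + λ²M²) − 1). Consequently, as T → ∞, the portion of the solution curve v ↦ (α(v), v) lying in the strip 0 ≤ α ≤ M converges to the vertical segment {0} × {0}. -/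
open Set

/-!
On the strip `0 ≤ α ≤ M` the first integral forces the slope up:
`1 + λ²α'² = T / (1 + λ²α²) ≥ T / (1 + λ²M²)`, so `λα' ≥ √(T/(1 + λ²M²) − 1)`.
A curve starting at `α(0) = 0` with at least that slope leaves the strip before time
`Mλ / √(T/(1 + λ²M²) − 1)`.
-/

theorem sqrt_le_mul_slope_of_first_integral {lam M T a a' : ℝ} (hlam : 0 ≤ lam) (ha' : 0 ≤ a')
    (ha : a ^ 2 ≤ M ^ 2) (hfirst : (1 + lam ^ 2 * a' ^ 2) * (1 + lam ^ 2 * a ^ 2) = T) :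
    Real.sqrt (T / (1 + lam ^ 2 * M ^ 2) - 1) ≤ lam * a' := by
  have hT : 0 ≤ T := hfirst ▸ by positivity
  have hbound : T / (1 + lam ^ 2 * M ^ 2) - 1 ≤ (lam * a') ^ 2 :=
    calc T / (1 + lam ^ 2 * M ^ 2) - 1 ≤ T / (1 + lam ^ 2 * a ^ 2) - 1 := by gcongr
      _ = (lam * a') ^ 2 := by rw [← hfirst]; field_simp; ring
  exact Real.sqrt_le_iff.2 ⟨mul_nonneg hlam ha', hbound⟩

theorem mul_sub_le_sub_of_le_hasDerivWithinAt_Icc {f f' : ℝ → ℝ} {a b c : ℝ} (hab : a ≤ b)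
    (hf : ∀ x ∈ Icc a b, HasDerivWithinAt f (f' x) (Icc a b) x)
    (hc : ∀ x ∈ Ico a b, c ≤ f' x) :
    c * (b - a) ≤ f b - f a := by
  -- fence `f` from below by the line through `(a, f a)` of slope `c`
  have hline : ∀ x, HasDerivAt (fun x ↦ f a + c * (x - a)) c x := fun x ↦
    ((hasDerivAt_id x).sub_const a |>.const_mul c |>.const_add (f a)).congr_deriv (mul_one c)
  have hfence := image_le_of_deriv_right_le_deriv_boundary
    (fun x _ ↦ (hline x).continuousAt.continuousWithinAt) (fun x _ ↦ (hline x).hasDerivWithinAt)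
    (by simp) (fun x hx ↦ (hf x hx).continuousWithinAt)
    (fun x hx ↦ (hf x (Ico_subset_Icc_self hx)).mono_of_mem_nhdsWithin
      (Icc_mem_nhdsGE_of_mem hx))
    hc (right_mem_Icc.2 hab)
  linarith

theorem barrier_ode_interval_length_bound_general (lam M T v₁ : ℝ) (hlam : 0 < lam)
    (hT : 1 + lam ^ 2 * M ^ 2 < T) (hv₁ : 0 < v₁)
    (α α' : ℝ → ℝ)
    (hd1 : ∀ v ∈ Icc 0 v₁, HasDerivWithinAt α (α' v) (Icc 0 v₁) v)
    (hfirst : ∀ v ∈ Icc 0 v₁,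
      (1 + lam ^ 2 * (α' v) ^ 2) * (1 + lam ^ 2 * (α v) ^ 2) = T)
    (h0 : α 0 = 0)
    (hmono : ∀ v ∈ Icc 0 v₁, 0 ≤ α' v)
    (hrange : ∀ v ∈ Icc 0 v₁, 0 ≤ α v ∧ α v ≤ M) :
    v₁ ≤ M * lam / Real.sqrt (T / (1 + lam ^ 2 * M ^ 2) - 1) := by
  set s := T / (1 + lam ^ 2 * M ^ 2) - 1
  have hs : 0 < s := sub_pos.2 <| (one_lt_div (by positivity)).2 hT
  have hslope : ∀ v ∈ Ico 0 v₁, Real.sqrt s ≤ lam * α' v := fun v hv ↦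
    have hv := Ico_subset_Icc_self hv
    sqrt_le_mul_slope_of_first_integral hlam.le (hmono v hv)
      (pow_le_pow_left₀ (hrange v hv).1 (hrange v hv).2 2) (hfirst v hv)
  have hgain := mul_sub_le_sub_of_le_hasDerivWithinAt_Icc hv₁.le
    (fun v hv ↦ (hd1 v hv).const_mul lam) hslope
  have hend := (hrange v₁ (right_mem_Icc.2 hv₁.le)).2
  rw [le_div_iff₀ (Real.sqrt_pos.2 hs)]
  calc v₁ * Real.sqrt s = Real.sqrt s * (v₁ - 0) := by ring
    _ ≤ lam * α v₁ - lam * α 0 := hgain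
    _ ≤ M * lam := by
      rw [h0, mul_zero, sub_zero, mul_comm M]
      exact mul_le_mul_of_nonneg_left hend hlam.le

/-- Let `λ > 0`, `M > 0`, `T > 1 + λ²M²`, `v₁ > 0`, and let `α` be a `C²`
solution on `[0, v₁]` of the barrier ODE with first integral
`(1 + λ²(α')²)(1 + λ²α²) = T`, satisfying `α(0) = 0`, `α' ≥ 0` and `0 ≤ α ≤ M` on
`[0, v₁]`. Then `v₁ ≤ M·λ/√(T/(1 + λ²M²) − 1)`; hence as `T → ∞` the part of the solution
curve lying in the strip `0 ≤ α ≤ M` collapses onto the vertical segment at `v = 0`. -/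
theorem barrier_ode_interval_length_bound (lam M T v₁ : ℝ) (hlam : 0 < lam) (hM : 0 < M)
    (hT : 1 + lam ^ 2 * M ^ 2 < T) (hv₁ : 0 < v₁)
    (α α' α'' : ℝ → ℝ)
    (hd1 : ∀ v ∈ Icc 0 v₁, HasDerivWithinAt α (α' v) (Icc 0 v₁) v)
    (hd2 : ∀ v ∈ Icc 0 v₁, HasDerivWithinAt α' (α'' v) (Icc 0 v₁) v)
    (hcont : ContinuousOn α'' (Icc 0 v₁))
    (hode : ∀ v ∈ Icc 0 v₁,
      α'' v * (1 + lam ^ 2 * (α v) ^ 2) + α v * (1 + lam ^ 2 * (α' v) ^ 2) = 0)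
    (hfirst : ∀ v ∈ Icc 0 v₁,
      (1 + lam ^ 2 * (α' v) ^ 2) * (1 + lam ^ 2 * (α v) ^ 2) = T)
    (h0 : α 0 = 0)
    (hmono : ∀ v ∈ Icc 0 v₁, 0 ≤ α' v)
    (hrange : ∀ v ∈ Icc 0 v₁, 0 ≤ α v ∧ α v ≤ M) :
    v₁ ≤ M * lam / Real.sqrt (T / (1 + lam ^ 2 * M ^ 2) - 1) :=
  barrier_ode_interval_length_bound_general lam M T v₁ hlam hT hv₁ α α' hd1 hfirst h0 hmono hrange
end

section
/- For every real λ > 0 and every real T > 1 there exist v₀ > 0 and a twice continuously differentiable function α : [0, v₀] → ℝ such that: α satisfies the barrier ODE α''·(1 + λ²α²) + α·(1 + λ²(α')²) = 0 on [0, v₀]; α(0) = 0 and α(v₀) = 0; α'(0) = √(T − 1)/λ; α(v) > 0 for all v ∈ (0, v₀); the first integral (1 + λ²(α')²)(1 + λ²α²) equals T identically on [0, v₀]; and the maximum value of α on [0, v₀] equals √(T − 1)/λ. -/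
/-! With `K = T - 1` and the ansatz `λ α = √K sin θ`, the first integral
`(1 + λ² α'²)(1 + λ² α²) = 1 + K` holds as soon as the phase satisfies
`θ' = (1 + K sin² θ)^(-1/2)`, and `α''` computed from it satisfies the barrier ODE.
So `θ` is the inverse of `v(θ) = ∫₀^θ √(1 + K sin² s) ds`, a global diffeomorphism since
`v' ≥ 1`. Then `α = (√K / λ) sin θ` vanishes at `v = 0` and `v₀ = v(π)`, is positive in
between, and attains its maximum `√K / λ` at `v(π/2)`. -/

open Set Real

section DerivBoundedBelow

open Filter

variable {g g' : ℝ → ℝ} {c : ℝ}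

theorem surjective_of_hasDerivAt_ge (hc : 0 < c) (hg : ∀ x, HasDerivAt g (g' x) x)
    (hg' : ∀ x, c ≤ g' x) : Function.Surjective g := by
  have hmono : Monotone fun x => g x - c * x :=
    monotone_of_hasDerivAt_nonneg (fun x => (hg x).sub ((hasDerivAt_id x).const_mul c))
      fun x => by simpa using hg' x
  have hline : Tendsto (fun x => g 0 + c * x) atTop atTop :=
    tendsto_atTop_add_const_left _ _ (tendsto_id.const_mul_atTop hc)
  have hline' : Tendsto (fun x => g 0 + c * x) atBot atBot :=
    tendsto_atBot_add_const_left _ _ (tendsto_id.const_mul_atBot hc)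
  refine continuous_iff_continuousAt.2 (fun x => (hg x).continuousAt) |>.surjective ?_ ?_
  · refine tendsto_atTop_mono' _ ((eventually_ge_atTop 0).mono fun x hx => ?_) hline
    have := hmono hx
    simp only [mul_zero, sub_zero] at this
    linarith
  · refine tendsto_atBot_mono' _ ((eventually_le_atBot 0).mono fun x hx => ?_) hline'
    have := hmono hx
    simp only [mul_zero, sub_zero] at this
    linarith

theorem exists_orderIso_of_hasDerivAt_ge (hc : 0 < c) (hg : ∀ x, HasDerivAt g (g' x) x)
    (hg' : ∀ x, c ≤ g' x) :
    ∃ e : ℝ ≃o ℝ, ⇑e = g ∧ ∀ y, HasDerivAt e.symm (g' (e.symm y))⁻¹ y := by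
  let e := (strictMono_of_hasDerivAt_pos hg fun x => hc.trans_le (hg' x)).orderIsoOfSurjective
    g (surjective_of_hasDerivAt_ge hc hg hg')
  refine ⟨e, rfl, fun y => ?_⟩
  exact (hg (e.symm y)).of_local_left_inverse e.symm.continuous.continuousAt
    (hc.trans_le (hg' _)).ne' (Eventually.of_forall e.apply_symm_apply)

end DerivBoundedBelow

noncomputable section

namespace Barrier

variable {K : ℝ}

def time (K θ : ℝ) : ℝ := ∫ s in 0..θ, √(1 + K * sin s ^ 2)

lemma one_le_one_add_mul_sin_sq (hK : 0 ≤ K) (s : ℝ) : 1 ≤ 1 + K * sin s ^ 2 := by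
  nlinarith [sq_nonneg (sin s)]

lemma hasDerivAt_time (K θ : ℝ) : HasDerivAt (time K) √(1 + K * sin θ ^ 2) θ :=
  ((by fun_prop : Continuous fun s => √(1 + K * sin s ^ 2)).integral_hasStrictDerivAt
    0 θ).hasDerivAt

@[simp] lemma time_zero (K : ℝ) : time K 0 = 0 := by simp [time]

lemma strictMono_time (hK : 0 ≤ K) : StrictMono (time K) :=
  strictMono_of_hasDerivAt_pos (hasDerivAt_time K)
    fun θ => by linarith [one_le_sqrt.2 (one_le_one_add_mul_sin_sq hK θ)]

lemma exists_phase (hK : 0 ≤ K) : ∃ θ : ℝ ≃o ℝ,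
    (∀ x, θ (time K x) = x) ∧ ∀ v, HasDerivAt θ (√(1 + K * sin (θ v) ^ 2))⁻¹ v := by
  obtain ⟨e, he, hθ⟩ := exists_orderIso_of_hasDerivAt_ge one_pos (hasDerivAt_time K)
    fun θ => one_le_sqrt.2 (one_le_one_add_mul_sin_sq hK θ)
  exact ⟨e.symm, fun x => by rw [← he, e.symm_apply_apply], hθ⟩

def profileDeriv (K A s : ℝ) : ℝ := A * cos s / √(1 + K * sin s ^ 2)

def profileDeriv2 (K A s : ℝ) : ℝ := -(A * (1 + K) * sin s) / (1 + K * sin s ^ 2) ^ 2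

lemma hasDerivAt_mul_sin (hK : 0 ≤ K) (A s : ℝ) :
    HasDerivAt (fun s => A * sin s) (profileDeriv K A s * √(1 + K * sin s ^ 2)) s := by
  have hq0 : 0 < √(1 + K * sin s ^ 2) :=
    sqrt_pos.2 (by linarith [one_le_one_add_mul_sin_sq hK s])
  exact ((hasDerivAt_sin s).const_mul A).congr_deriv (by rw [profileDeriv]; field_simp)

lemma continuous_profileDeriv2 (hK : 0 ≤ K) (A : ℝ) : Continuous (profileDeriv2 K A) :=
  Continuous.div (by fun_prop) (by fun_prop)
    fun s => pow_ne_zero 2 (by linarith [one_le_one_add_mul_sin_sq hK s])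

lemma hasDerivAt_profileDeriv (hK : 0 ≤ K) (A s : ℝ) :
    HasDerivAt (profileDeriv K A) (profileDeriv2 K A s * √(1 + K * sin s ^ 2)) s := by
  have hD := one_le_one_add_mul_sin_sq hK s
  have hq : √(1 + K * sin s ^ 2) ^ 2 = 1 + K * sin s ^ 2 := sq_sqrt (by linarith)
  have hq0 : 0 < √(1 + K * sin s ^ 2) := sqrt_pos.2 (by linarith)
  have hsqrt : HasDerivAt (fun s => √(1 + K * sin s ^ 2))
      (K * (2 * sin s * cos s) / (2 * √(1 + K * sin s ^ 2))) s :=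
    ((((hasDerivAt_sin s).fun_pow 2).const_mul K).const_add 1).sqrt (by linarith) |>.congr_deriv
      (by push_cast; ring)
  refine (((hasDerivAt_cos s).const_mul A).div hsqrt hq0.ne').congr_deriv ?_
  rw [profileDeriv2]
  generalize √(1 + K * sin s ^ 2) = q at hq hq0 ⊢
  field_simp
  linear_combination
    A * sin s * ((1 + K) * (q ^ 2 + 1 + K * sin s ^ 2) - (1 + K * sin s ^ 2) ^ 2) * hq
      - A * K * sin s * (1 + K * sin s ^ 2) ^ 2 * sin_sq_add_cos_sq s

variable {θ : ℝ → ℝ}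

lemma hasDerivAt_comp_phase (hK : 0 ≤ K)
    (hθ : ∀ v, HasDerivAt θ (√(1 + K * sin (θ v) ^ 2))⁻¹ v) {F F' : ℝ → ℝ}
    (hF : ∀ s, HasDerivAt F (F' s * √(1 + K * sin s ^ 2)) s) (v : ℝ) :
    HasDerivAt (F ∘ θ) (F' (θ v)) v := by
  have hq0 : 0 < √(1 + K * sin (θ v) ^ 2) :=
    sqrt_pos.2 (by linarith [one_le_one_add_mul_sin_sq hK (θ v)])
  exact ((hF (θ v)).comp v (hθ v)).congr_deriv (by field_simp)

variable {lam A : ℝ}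

lemma one_add_sq_mul_profileDeriv_sq (hK : 0 ≤ K) (hA : lam ^ 2 * A ^ 2 = K) (s : ℝ) :
    1 + lam ^ 2 * profileDeriv K A s ^ 2 = (1 + K) / (1 + K * sin s ^ 2) := by
  have hD := one_le_one_add_mul_sin_sq hK s
  rw [profileDeriv, div_pow, sq_sqrt (by linarith), mul_pow, ← mul_div_assoc, ← mul_assoc, hA]
  field_simp
  linear_combination K * sin_sq_add_cos_sq s

lemma one_add_sq_mul_sq_sin (hA : lam ^ 2 * A ^ 2 = K) (s : ℝ) :
    1 + lam ^ 2 * (A * sin s) ^ 2 = 1 + K * sin s ^ 2 := by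
  rw [← hA]; ring

lemma first_integral_eq (hK : 0 ≤ K) (hA : lam ^ 2 * A ^ 2 = K) (s : ℝ) :
    (1 + lam ^ 2 * profileDeriv K A s ^ 2) * (1 + lam ^ 2 * (A * sin s) ^ 2) = 1 + K := by
  have hD := one_le_one_add_mul_sin_sq hK s
  rw [one_add_sq_mul_profileDeriv_sq hK hA, one_add_sq_mul_sq_sin hA]
  field_simp

lemma ode_eq_zero (hK : 0 ≤ K) (hA : lam ^ 2 * A ^ 2 = K) (s : ℝ) :
    profileDeriv2 K A s * (1 + lam ^ 2 * (A * sin s) ^ 2) +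
      A * sin s * (1 + lam ^ 2 * profileDeriv K A s ^ 2) = 0 := by
  have hD := one_le_one_add_mul_sin_sq hK s
  rw [one_add_sq_mul_profileDeriv_sq hK hA, one_add_sq_mul_sq_sin hA, profileDeriv2]
  field_simp
  ring

end Barrier

end

open Barrier in
/-- For every `λ > 0` and `T > 1` there exist `v₀ > 0` and a `C²`
function `α` on `[0, v₀]` solving the barrier ODE, with `α(0) = α(v₀) = 0`,
`α'(0) = √(T − 1)/λ`, `α > 0` on `(0, v₀)`, first integral identically equal to `T`,
and maximum value `√(T − 1)/λ` on `[0, v₀]`. -/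
theorem barrier_ode_existence (lam T : ℝ) (hlam : 0 < lam) (hT : 1 < T) :
    ∃ (v₀ : ℝ) (α α' α'' : ℝ → ℝ), 0 < v₀ ∧
      (∀ v ∈ Icc 0 v₀, HasDerivWithinAt α (α' v) (Icc 0 v₀) v) ∧
      (∀ v ∈ Icc 0 v₀, HasDerivWithinAt α' (α'' v) (Icc 0 v₀) v) ∧
      ContinuousOn α'' (Icc 0 v₀) ∧
      (∀ v ∈ Icc 0 v₀,
        α'' v * (1 + lam ^ 2 * (α v) ^ 2) + α v * (1 + lam ^ 2 * (α' v) ^ 2) = 0) ∧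
      α 0 = 0 ∧ α v₀ = 0 ∧
      α' 0 = Real.sqrt (T - 1) / lam ∧
      (∀ v ∈ Ioo 0 v₀, 0 < α v) ∧
      (∀ v ∈ Icc 0 v₀,
        (1 + lam ^ 2 * (α' v) ^ 2) * (1 + lam ^ 2 * (α v) ^ 2) = T) ∧
      IsGreatest (α '' Icc 0 v₀) (Real.sqrt (T - 1) / lam) := by
  set K := T - 1
  set A := √K / lam
  have hK : 0 ≤ K := by simp only [K]; linarith
  have hA : lam ^ 2 * A ^ 2 = K := by simp only [A]; field_simp; exact sq_sqrt hK
  have hA0 : 0 < A := div_pos (sqrt_pos.2 (by simp only [K]; linarith)) hlam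
  obtain ⟨θ, hθ_time, hθ⟩ := exists_phase hK
  have hθ0 : θ 0 = 0 := by simpa using hθ_time 0
  have htime := strictMono_time hK
  refine ⟨time K π, fun v => A * sin (θ v), fun v => profileDeriv K A (θ v),
    fun v => profileDeriv2 K A (θ v), by simpa using htime pi_pos,
    fun v _ => (hasDerivAt_comp_phase hK hθ (hasDerivAt_mul_sin hK A) v).hasDerivWithinAt,
    fun v _ => (hasDerivAt_comp_phase hK hθ (hasDerivAt_profileDeriv hK A) v).hasDerivWithinAt,
    ((continuous_profileDeriv2 hK A).comp θ.continuous).continuousOn,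
    fun v _ => ode_eq_zero hK hA _, by simp [hθ0], by simp [hθ_time],
    by simp [profileDeriv, hθ0, A, K], fun v ⟨h0, hπ⟩ => ?_,
    fun v _ => (by ring : T = 1 + K) ▸ first_integral_eq hK hA _, ?_⟩
  · refine mul_pos hA0 (sin_pos_of_pos_of_lt_pi ?_ ?_)
    · simpa [hθ0] using θ.strictMono h0
    · simpa [hθ_time] using θ.strictMono hπ
  · refine ⟨⟨time K (π / 2), ⟨?_, ?_⟩, by simp [hθ_time]⟩, ?_⟩
    · simpa using (htime (half_pos pi_pos)).le
    · exact (htime (half_lt_self pi_pos)).le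
    · rintro _ ⟨v, -, rfl⟩
      exact mul_le_of_le_one_right hA0.le (sin_le_one _)
end
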